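/- Discrete Harnack-type derivative estimate: there is a constant C > 0 such that for every finite grid domain D ⊂ ℤ² containing 0 and every bounded function h on the vertices of D together with its boundary, discrete harmonic on the interior vertices, the discrete derivatives satisfy |h(e₁) − h(0)| ≤ C · inr_0(D)^{-1} · ‖h‖_∞ and |h(e₂) − h(0)| ≤ C · inr_0(D)^{-1} · ‖h‖_∞, where e₁ = (1,0), e₂ = (0,1). -/

import Mathlib

open Set

/-- Euclidean norm of a lattice point of `ℤ²`. -/
noncomputable def znorm (v : ℤ × ℤ) : ℝ := Real.sqrt ((v.1 : ℝ) ^ 2 + (v.2 : ℝ) ^ 2)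

/-- Inradius of the domain `D ⊆ ℤ²` seen from `0`: `inf {|z| : z ∉ D}`. -/
noncomputable def inrad (D : Finset (ℤ × ℤ)) : ℝ :=
  sInf {r : ℝ | ∃ v : ℤ × ℤ, v ∉ D ∧ r = znorm v}

/-- The four grid neighbors of a vertex. -/
def nbrs (v : ℤ × ℤ) : List (ℤ × ℤ) :=
  [(v.1 + 1, v.2), (v.1 - 1, v.2), (v.1, v.2 + 1), (v.1, v.2 - 1)]

/-- `h` is discrete harmonic at every vertex of `D`: its value is the average of its
values at the four neighbors (boundary values being the values at neighbors outside `D`). -/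
def DiscreteHarmonicOn (D : Finset (ℤ × ℤ)) (h : ℤ × ℤ → ℝ) : Prop :=
  ∀ v ∈ D, h v = (h (v.1 + 1, v.2) + h (v.1 - 1, v.2)
    + h (v.1, v.2 + 1) + h (v.1, v.2 - 1)) / 4

namespace DDE

open Finset Real Matrix

/-- ψ r y = r^y + r^(-y) (integer powers). -/
noncomputable def psi (r : ℝ) (y : ℤ) : ℝ := r ^ y + r ^ (-y)

lemma psi_even (r : ℝ) (y : ℤ) : psi r (-y) = psi r y := by
  simp [psi, add_comm]

lemma psi_rec (r : ℝ) (hr : r ≠ 0) (y : ℤ) :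
    psi r (y+1) + psi r (y-1) = (r + r⁻¹) * psi r y := by
  simp only [psi, zpow_add₀ hr, zpow_sub₀ hr, neg_add, neg_sub, zpow_one, sub_eq_add_neg,
    _root_.zpow_neg, zpow_one]
  field_simp
  ring

lemma psi_pos {r : ℝ} (hr : 0 < r) (y : ℤ) : 0 < psi r y := by
  have := zpow_pos hr y
  have := zpow_pos hr (-y)
  unfold psi; linarith

lemma psi_mono {r : ℝ} (hr : 1 ≤ r) {y Y : ℤ} (h1 : |y| ≤ Y) : psi r y ≤ psi r Y := by
  have hr0 : (0:ℝ) < r := lt_of_lt_of_le one_pos hr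
  -- reduce to 0 ≤ y ≤ Y by evenness
  wlog hy : 0 ≤ y generalizing y
  · have := this (y := -y) (by simpa [abs_neg] using h1) (by omega)
    simpa [psi_even] using this
  have hyY : y ≤ Y := le_trans (le_abs_self y) h1
  -- r^y + r^(-y) ≤ r^Y + r^(-Y) ⟺ (r^Y - r^y)(1 - r^(-Y)·r^(-y)) ≥ 0
  have h1' : r ^ y ≤ r ^ Y := zpow_le_zpow_right₀ hr hyY
  have h2' : r ^ (-Y) ≤ r ^ (-y) := zpow_le_zpow_right₀ hr (by omega)
  have key : r ^ (-y) - r ^ (-Y) ≤ r ^ Y - r ^ y := by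
    have e1 : r ^ (-y) - r ^ (-Y) = (r^Y - r^y) * (r^(-y) * r^(-Y)) := by
      have hy0 : r ^ y ≠ 0 := ne_of_gt (zpow_pos hr0 _)
      have hY0 : r ^ Y ≠ 0 := ne_of_gt (zpow_pos hr0 _)
      simp only [_root_.zpow_neg]
      field_simp
    have hle1 : r^(-y) * r^(-Y) ≤ 1 := by
      rw [← zpow_add₀ (ne_of_gt hr0)]
      calc r ^ (-y + -Y) ≤ r ^ (0:ℤ) := zpow_le_zpow_right₀ hr (by omega)
        _ = 1 := zpow_zero r
    have hnn : 0 ≤ r^Y - r^y := sub_nonneg.2 h1'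
    calc r ^ (-y) - r ^ (-Y) = (r^Y - r^y) * (r^(-y) * r^(-Y)) := e1
      _ ≤ (r^Y - r^y) * 1 := by
          apply mul_le_mul_of_nonneg_left hle1 hnn
      _ = r^Y - r^y := mul_one _
  unfold psi; linarith

lemma psi_ge {r : ℝ} (hr : 1 ≤ r) (m : ℕ) : r ^ m ≤ psi r m := by
  have hr0 : (0:ℝ) < r := lt_of_lt_of_le one_pos hr
  have : (0:ℝ) < r ^ (-(m:ℤ)) := zpow_pos hr0 _
  have e : r ^ ((m:ℕ):ℤ) = r ^ (m:ℕ) := zpow_natCast r m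
  unfold psi; rw [e]; linarith


lemma cos_nat_pi (d : ℕ) : Real.cos (d * π) = (-1:ℝ)^d := by
  induction d with
  | zero => simp
  | succ n ih =>
    have : ((n+1 : ℕ) : ℝ) * π = n * π + π := by push_cast; ring
    rw [this, Real.cos_add, Real.cos_pi, Real.sin_pi, ih]
    ring

lemma sin_nat_pi (d : ℕ) : Real.sin (d * π) = 0 := by
  simpa using Real.sin_int_mul_pi (d : ℤ)

/-- telescoping: ∑_{k<m} cos((2k+1)φ) = sin(2mφ)/(2 sin φ). -/
lemma sum_cos_odd (m : ℕ) (φ : ℝ) (h : Real.sin φ ≠ 0) :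
    ∑ k ∈ range m, Real.cos ((2*k+1) * φ) = Real.sin (2*m*φ) / (2 * Real.sin φ) := by
  induction m with
  | zero => simp
  | succ n ih =>
    rw [Finset.sum_range_succ, ih]
    have key : Real.sin (2*(n+1:ℕ)*φ) = Real.sin (2*n*φ) + 2 * Real.cos ((2*n+1)*φ) * Real.sin φ := by
      have e1 : Real.sin ((2*n+1)*φ + φ) = Real.sin ((2*n+1)*φ) * Real.cos φ + Real.cos ((2*n+1)*φ) * Real.sin φ := Real.sin_add _ _
      have e2 : Real.sin ((2*n+1)*φ - φ) = Real.sin ((2*n+1)*φ) * Real.cos φ - Real.cos ((2*n+1)*φ) * Real.sin φ := Real.sin_sub _ _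
      have a1 : (2*n+1)*φ + φ = 2*(n+1:ℕ)*φ := by push_cast; ring
      have a2 : (2*n+1)*φ - φ = 2*n*φ := by ring
      rw [a1] at e1; rw [a2] at e2
      linarith
    rw [key]
    field_simp

/-- telescoping: ∑_{k<m} sin((2k+1)φ) = (1 - cos(2mφ))/(2 sin φ). -/
lemma sum_sin_odd (m : ℕ) (φ : ℝ) (h : Real.sin φ ≠ 0) :
    ∑ k ∈ range m, Real.sin ((2*k+1) * φ) = (1 - Real.cos (2*m*φ)) / (2 * Real.sin φ) := by
  induction m with
  | zero => simp
  | succ n ih =>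
    rw [Finset.sum_range_succ, ih]
    have key : Real.cos (2*(n+1:ℕ)*φ) = Real.cos (2*n*φ) - 2 * Real.sin ((2*n+1)*φ) * Real.sin φ := by
      have e1 : Real.cos ((2*n+1)*φ + φ) = Real.cos ((2*n+1)*φ) * Real.cos φ - Real.sin ((2*n+1)*φ) * Real.sin φ := Real.cos_add _ _
      have e2 : Real.cos ((2*n+1)*φ - φ) = Real.cos ((2*n+1)*φ) * Real.cos φ + Real.sin ((2*n+1)*φ) * Real.sin φ := Real.cos_sub _ _
      have a1 : (2*n+1)*φ + φ = 2*(n+1:ℕ)*φ := by push_cast; ring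
      have a2 : (2*n+1)*φ - φ = 2*n*φ := by ring
      rw [a1] at e1; rw [a2] at e2
      linarith
    rw [key]
    field_simp
    ring

/-- the key evaluation: for 0 < d < 2a+3,
  ∑_{k<a+1} cos((2k+1) π d/(2a+3)) = -(-1)^d/2 . -/
lemma sum_T (a d : ℕ) (hd : 0 < d) (hdN : d < 2*a+3) :
    ∑ k ∈ range (a+1), Real.cos ((2*k+1) * (π * d / (2*a+3))) = -((-1:ℝ)^d)/2 := by
  set φ : ℝ := π * d / (2*a+3) with hφ
  have hN : (0:ℝ) < 2*a+3 := by positivity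
  have hφpos : 0 < φ := by
    apply div_pos (by positivity) hN
  have hφlt : φ < π := by
    rw [hφ, div_lt_iff₀ hN]
    have : (d:ℝ) < 2*a+3 := by exact_mod_cast hdN
    nlinarith [Real.pi_pos]
  have hs : Real.sin φ ≠ 0 := ne_of_gt (Real.sin_pos_of_pos_of_lt_pi hφpos hφlt)
  rw [sum_cos_odd _ _ hs]
  have harg : 2*((a:ℝ)+1)*φ = d * π - φ := by
    rw [hφ]; field_simp; ring
  have : (2*((a+1:ℕ)):ℝ) = 2*((a:ℝ)+1) := by push_cast; ring
  rw [show ((2:ℝ)*(a+1:ℕ)*φ) = 2*((a:ℝ)+1)*φ by push_cast; ring, harg]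
  rw [Real.sin_sub, sin_nat_pi, cos_nat_pi]
  field_simp
  ring


noncomputable def th (a j : ℕ) : ℝ := π * (j+1) / (2*a+3)

lemma th_pos (a j : ℕ) : 0 < th a j := by
  unfold th; positivity

lemma th_lt (a : ℕ) {j : ℕ} (hj : j < a+1) : th a j ≤ π/2 := by
  unfold th
  rw [div_le_div_iff₀ (by positivity) (by norm_num)]
  have : (j:ℝ)+1 ≤ a+1 := by
    have : (j:ℝ) ≤ a := by exact_mod_cast Nat.lt_succ_iff.mp hj
    linarith
  nlinarith [Real.pi_pos]

lemma sin_th_pos (a : ℕ) {j : ℕ} (hj : j < a+1) : 0 < Real.sin (th a j) :=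
  Real.sin_pos_of_pos_of_lt_pi (th_pos a j)
    (lt_of_le_of_lt (th_lt a hj) (by nlinarith [Real.pi_pos]))

lemma sin_th_ge (a : ℕ) {j : ℕ} (hj : j < a+1) :
    2*((j:ℝ)+1)/(2*a+3) ≤ Real.sin (th a j) := by
  have := Real.mul_le_sin (x := th a j) (le_of_lt (th_pos a j)) (th_lt a hj)
  have e : 2/π * th a j = 2*((j:ℝ)+1)/(2*a+3) := by
    unfold th
    field_simp
  linarith [e ▸ this]

/-- orthogonality of the discrete sine modes -/
lemma sine_orth (a : ℕ) {j j' : ℕ} (hj : j < a+1) (hj' : j' < a+1) :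
    ∑ k ∈ range (a+1), Real.sin ((2*k+1) * th a j) * Real.sin ((2*k+1) * th a j')
      = if j = j' then (2*(a:ℝ)+3)/4 else 0 := by
  have hprod : ∀ A B : ℝ, Real.sin A * Real.sin B = (Real.cos (A-B) - Real.cos (A+B))/2 := by
    intro A B
    have := Real.cos_sub A B
    have := Real.cos_add A B
    linarith
  simp only [hprod]
  rw [← Finset.sum_div, Finset.sum_sub_distrib]
  -- second sum: d' = j + j' + 2
  have hsum2 : ∑ k ∈ range (a+1), Real.cos ((2*k+1) * th a j + (2*k+1) * th a j')
      = -((-1:ℝ)^(j+j'+2))/2 := by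
    have harg : ∀ k : ℕ, (2*(k:ℝ)+1) * th a j + (2*k+1) * th a j'
        = (2*k+1) * (π * (j+j'+2) / (2*a+3)) := by
      intro k; unfold th; push_cast; field_simp; ring
    calc ∑ k ∈ range (a+1), Real.cos ((2*k+1) * th a j + (2*k+1) * th a j')
        = ∑ k ∈ range (a+1), Real.cos ((2*k+1) * (π * ((j+j'+2:ℕ)) / (2*a+3))) := by
          apply Finset.sum_congr rfl; intro k _
          congr 1
          push_cast
          exact harg k
      _ = -((-1:ℝ)^(j+j'+2))/2 := sum_T a (j+j'+2) (by omega) (by omega)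
  by_cases hjj : j = j'
  · subst hjj
    have hsum1 : ∑ k ∈ range (a+1), Real.cos ((2*k+1) * th a j - (2*k+1) * th a j) = a+1 := by
      simp
    rw [hsum1, hsum2]
    rw [if_pos rfl]
    have : (-1:ℝ)^(j+j+2) = 1 := by
      have : j+j+2 = 2*(j+1) := by ring
      rw [this, pow_mul]; norm_num
    rw [this]
    push_cast; ring
  · rw [if_neg hjj]
    -- d = |j - j'|
    rcases Nat.lt_or_ge j j' with hlt | hge
    · -- j < j' : use d = j' - j ; cos(A-B) = cos(B-A)
      have hsum1 : ∑ k ∈ range (a+1), Real.cos ((2*k+1) * th a j - (2*k+1) * th a j')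
          = -((-1:ℝ)^(j'-j))/2 := by
        have harg : ∀ k : ℕ, Real.cos ((2*(k:ℝ)+1) * th a j - (2*k+1) * th a j')
            = Real.cos ((2*k+1) * (π * ((j'-j : ℕ)) / (2*a+3))) := by
          intro k
          rw [← Real.cos_neg]
          congr 1
          unfold th
          have : ((j'-j:ℕ):ℝ) = (j':ℝ) - j := by
            push_cast [Nat.cast_sub (le_of_lt hlt)]; ring
          rw [this]
          field_simp; ring
        calc ∑ k ∈ range (a+1), Real.cos ((2*k+1) * th a j - (2*k+1) * th a j')
            = ∑ k ∈ range (a+1), Real.cos ((2*k+1) * (π * ((j'-j:ℕ)) / (2*a+3))) := by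
              apply Finset.sum_congr rfl; intro k _; push_cast; exact harg k
          _ = -((-1:ℝ)^(j'-j))/2 := sum_T a (j'-j) (by omega) (by omega)
      rw [hsum1, hsum2]
      have hpar : (-1:ℝ)^(j'-j) = (-1:ℝ)^(j+j'+2) := by
        have h2 : (-1:ℝ)^(j'-j) * (-1:ℝ)^(j'-j) = 1 := by
          rw [← pow_add]
          have : j'-j + (j'-j) = 2*(j'-j) := by ring
          rw [this, pow_mul]; norm_num
        have : (-1:ℝ)^(j+j'+2) = (-1:ℝ)^(j'-j) * (-1:ℝ)^(j+j'+2 - (j'-j)) := by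
          rw [← pow_add]
          congr 1
          omega
        rw [this]
        have : j+j'+2 - (j'-j) = 2*(j+1) := by omega
        rw [this, pow_mul]
        norm_num
      rw [hpar]; ring
    · have hlt : j' < j := by omega
      have hsum1 : ∑ k ∈ range (a+1), Real.cos ((2*k+1) * th a j - (2*k+1) * th a j')
          = -((-1:ℝ)^(j-j'))/2 := by
        have harg : ∀ k : ℕ, Real.cos ((2*(k:ℝ)+1) * th a j - (2*k+1) * th a j')
            = Real.cos ((2*k+1) * (π * ((j-j' : ℕ)) / (2*a+3))) := by
          intro k
          congr 1
          unfold th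
          have : ((j-j':ℕ):ℝ) = (j:ℝ) - j' := by
            push_cast [Nat.cast_sub (le_of_lt hlt)]; ring
          rw [this]
          field_simp; ring
        calc ∑ k ∈ range (a+1), Real.cos ((2*k+1) * th a j - (2*k+1) * th a j')
            = ∑ k ∈ range (a+1), Real.cos ((2*k+1) * (π * ((j-j':ℕ)) / (2*a+3))) := by
              apply Finset.sum_congr rfl; intro k _; push_cast; exact harg k
          _ = -((-1:ℝ)^(j-j'))/2 := sum_T a (j-j') (by omega) (by omega)
      rw [hsum1, hsum2]
      have hpar : (-1:ℝ)^(j-j') = (-1:ℝ)^(j+j'+2) := by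
        have : (-1:ℝ)^(j+j'+2) = (-1:ℝ)^(j-j') * (-1:ℝ)^(j+j'+2 - (j-j')) := by
          rw [← pow_add]; congr 1; omega
        rw [this]
        have : j+j'+2 - (j-j') = 2*(j'+1) := by omega
        rw [this, pow_mul]
        norm_num
      rw [hpar]; ring


/-- matrix of sine values -/
noncomputable def SV (a j k : ℕ) : ℝ := Real.sin ((2*k+1) * th a j)

noncomputable def V (a : ℕ) : Matrix (Fin (a+1)) (Fin (a+1)) ℝ :=
  Matrix.of fun j k => SV a (j:ℕ) (k:ℕ)

lemma VVt (a : ℕ) : V a * (V a)ᵀ = ((2*(a:ℝ)+3)/4) • (1 : Matrix (Fin (a+1)) (Fin (a+1)) ℝ) := by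
  ext j j'
  simp only [Matrix.mul_apply, Matrix.transpose_apply, Matrix.smul_apply, Matrix.one_apply, V,
    Matrix.of_apply, smul_eq_mul]
  rw [Fin.sum_univ_eq_sum_range (fun k => SV a (j:ℕ) k * SV a (j':ℕ) k)]
  unfold SV
  rw [sine_orth a j.isLt j'.isLt]
  by_cases h : (j:ℕ) = (j':ℕ)
  · have : j = j' := Fin.ext h
    simp [h, this]
  · have : j ≠ j' := fun hc => h (by rw [hc])
    simp [h, this]

lemma VtV (a : ℕ) {k k' : ℕ} (hk : k < a+1) (hk' : k' < a+1) :
    ∑ j ∈ range (a+1), SV a j k * SV a j k' = if k = k' then (2*(a:ℝ)+3)/4 else 0 := by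
  have hN : (2*(a:ℝ)+3) ≠ 0 := by positivity
  have h1 : ((4/(2*(a:ℝ)+3)) • V a) * (V a)ᵀ = 1 := by
    rw [Matrix.smul_mul, VVt, smul_smul]
    rw [show (4/(2*(a:ℝ)+3)) * ((2*(a:ℝ)+3)/4) = 1 by field_simp]
    simp
  have h2 : (V a)ᵀ * ((4/(2*(a:ℝ)+3)) • V a) = 1 := mul_eq_one_comm.mp h1
  have := congrFun (congrFun h2 ⟨k, hk⟩) ⟨k', hk'⟩
  simp only [Matrix.mul_apply, Matrix.transpose_apply, Matrix.smul_apply, Matrix.one_apply,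
    smul_eq_mul, V, Matrix.of_apply] at this
  rw [Fin.sum_univ_eq_sum_range (fun j => SV a j k * (4/(2*(a:ℝ)+3) * SV a j k'))] at this
  have e : ∑ j ∈ range (a+1), SV a j k * SV a j k'
      = (2*(a:ℝ)+3)/4 * ∑ j ∈ range (a+1), SV a j k * (4/(2*(a:ℝ)+3) * SV a j k') := by
    rw [Finset.mul_sum]
    apply Finset.sum_congr rfl
    intro j _
    field_simp
  rw [e, this]
  by_cases h : k = k'
  · have : (⟨k, hk⟩ : Fin (a+1)) = ⟨k', hk'⟩ := Fin.ext h
    simp [h, this]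
  · have : (⟨k, hk⟩ : Fin (a+1)) ≠ ⟨k', hk'⟩ := fun hc => h (Fin.mk.inj_iff.mp hc)
    simp [h, this]

/-- the DST coefficients -/
noncomputable def coefc (a j : ℕ) : ℝ :=
  (4/(2*(a:ℝ)+3)) * ∑ k ∈ range (a+1), SV a j k

/-- inversion: ∑_j coefc_j sin((2k+1)θ_j) = 1 on the grid -/
lemma coefc_inv (a : ℕ) {k : ℕ} (hk : k < a+1) :
    ∑ j ∈ range (a+1), coefc a j * SV a j k = 1 := by
  have hN : (0:ℝ) < 2*(a:ℝ)+3 := by positivity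
  unfold coefc
  have e : ∀ j, (4/(2*(a:ℝ)+3) * ∑ k' ∈ range (a+1), SV a j k') * SV a j k
      = (4/(2*(a:ℝ)+3)) * ∑ k' ∈ range (a+1), SV a j k * SV a j k' := by
    intro j
    rw [Finset.mul_sum, Finset.mul_sum, Finset.sum_mul]
    apply Finset.sum_congr rfl
    intro k' _
    ring
  rw [Finset.sum_congr rfl (fun j _ => e j), ← Finset.mul_sum]
  rw [Finset.sum_comm]
  have : ∀ k' ∈ range (a+1), ∑ j ∈ range (a+1), SV a j k * SV a j k'
      = if k = k' then (2*(a:ℝ)+3)/4 else 0 := by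
    intro k' hk'
    exact VtV a hk (mem_range.mp hk')
  rw [Finset.sum_congr rfl this, Finset.sum_ite_eq (range (a+1)) k (fun _ => (2*(a:ℝ)+3)/4)]
  rw [if_pos (mem_range.mpr hk)]
  field_simp

lemma coefc_nonneg (a : ℕ) {j : ℕ} (hj : j < a+1) : 0 ≤ coefc a j := by
  have hs := sin_th_pos a hj
  unfold coefc SV
  rw [sum_sin_odd _ _ (ne_of_gt hs)]
  have h1 : Real.cos (2*(a+1:ℕ)*th a j) ≤ 1 := Real.cos_le_one _
  have : (0:ℝ) ≤ (1 - Real.cos (2*(a+1:ℕ)*th a j)) / (2 * Real.sin (th a j)) := by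
    apply div_nonneg (by linarith) (by linarith)
  have hN : (0:ℝ) ≤ 4/(2*(a:ℝ)+3) := by positivity
  exact mul_nonneg hN this

lemma coefc_sin_le (a : ℕ) {j : ℕ} (hj : j < a+1) :
    coefc a j * Real.sin (th a j) ≤ 4/(2*(a:ℝ)+3) := by
  have hs := sin_th_pos a hj
  unfold coefc SV
  rw [sum_sin_odd _ _ (ne_of_gt hs)]
  have h1 : -1 ≤ Real.cos (2*(a+1:ℕ)*th a j) := Real.neg_one_le_cos _
  have hN : (0:ℝ) < 2*(a:ℝ)+3 := by positivity
  have e : 4/(2*(a:ℝ)+3) * ((1 - Real.cos (2*(a+1:ℕ)*th a j)) / (2 * Real.sin (th a j))) * Real.sin (th a j)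
      = (4/(2*(a:ℝ)+3)) * ((1 - Real.cos (2*(a+1:ℕ)*th a j))/2) := by
    field_simp
  rw [e]
  have : (1 - Real.cos (2*(a+1:ℕ)*th a j))/2 ≤ 1 := by linarith
  calc (4/(2*(a:ℝ)+3)) * ((1 - Real.cos (2*(a+1:ℕ)*th a j))/2)
      ≤ (4/(2*(a:ℝ)+3)) * 1 := by
        apply mul_le_mul_of_nonneg_left this (by positivity)
    _ = 4/(2*(a:ℝ)+3) := mul_one _


noncomputable def cc (a j : ℕ) : ℝ := 2 - Real.cos (2 * th a j)
noncomputable def rr (a j : ℕ) : ℝ := cc a j + Real.sqrt ((cc a j)^2 - 1)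

lemma one_le_cc (a j : ℕ) : 1 ≤ cc a j := by
  have := Real.cos_le_one (2 * th a j); unfold cc; linarith

lemma cc_sq_sub (a j : ℕ) : 0 ≤ (cc a j)^2 - 1 := by
  have := one_le_cc a j; nlinarith

lemma one_le_rr (a j : ℕ) : 1 ≤ rr a j := by
  have h1 := one_le_cc a j
  have h2 : 0 ≤ Real.sqrt ((cc a j)^2 - 1) := Real.sqrt_nonneg _
  unfold rr; linarith

lemma rr_pos (a j : ℕ) : 0 < rr a j := lt_of_lt_of_le one_pos (one_le_rr a j)

lemma rr_add_inv (a j : ℕ) : rr a j + (rr a j)⁻¹ = 2 * cc a j := by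
  have h0 := rr_pos a j
  have hsq : Real.sqrt ((cc a j)^2 - 1) ^ 2 = (cc a j)^2 - 1 := Real.sq_sqrt (cc_sq_sub a j)
  have hmul : rr a j * (cc a j - Real.sqrt ((cc a j)^2 - 1)) = 1 := by
    unfold rr; nlinarith [hsq]
  have hinv : (rr a j)⁻¹ = cc a j - Real.sqrt ((cc a j)^2 - 1) :=
    inv_eq_of_mul_eq_one_right hmul
  rw [hinv]; unfold rr; ring

lemma rr_ge (a : ℕ) {j : ℕ} (hj : j < a+1) : 1 + 2 * Real.sin (th a j) ≤ rr a j := by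
  have hs := sin_th_pos a hj
  have hcc : cc a j - 1 = 2 * Real.sin (th a j)^2 := by
    unfold cc
    have := Real.cos_two_mul (th a j)
    have := Real.sin_sq_add_cos_sq (th a j)
    nlinarith
  have h1 := one_le_cc a j
  have hineq : (2 * Real.sin (th a j))^2 ≤ (cc a j)^2 - 1 := by nlinarith
  have : 2 * Real.sin (th a j) ≤ Real.sqrt ((cc a j)^2 - 1) := by
    have := Real.sqrt_le_sqrt (le_of_lt (lt_of_lt_of_le (by nlinarith) (le_of_eq rfl)) : (0:ℝ) ≤ (cc a j)^2 - 1)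
    calc 2 * Real.sin (th a j) = Real.sqrt ((2 * Real.sin (th a j))^2) := (Real.sqrt_sq (by linarith)).symm
      _ ≤ Real.sqrt ((cc a j)^2 - 1) := Real.sqrt_le_sqrt hineq
  unfold rr; linarith

/-- The barrier. -/
noncomputable def chi (x : ℤ) : ℝ := 1/2 - x

noncomputable def Wf (a : ℕ) (v : ℤ × ℤ) : ℝ :=
  2 * chi v.1 / (2*(a:ℝ)+3)
  + ∑ j ∈ range (a+1), coefc a j * Real.sin (2 * th a j * chi v.1)
      * (psi (rr a j) v.2 / psi (rr a j) ((a:ℤ)+1))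

lemma mode_harm (a j : ℕ) (x y : ℤ) :
    coefc a j * Real.sin (2 * th a j * chi (x+1)) * (psi (rr a j) y / psi (rr a j) ((a:ℤ)+1))
      + coefc a j * Real.sin (2 * th a j * chi (x-1)) * (psi (rr a j) y / psi (rr a j) ((a:ℤ)+1))
      + coefc a j * Real.sin (2 * th a j * chi x) * (psi (rr a j) (y+1) / psi (rr a j) ((a:ℤ)+1))
      + coefc a j * Real.sin (2 * th a j * chi x) * (psi (rr a j) (y-1) / psi (rr a j) ((a:ℤ)+1))
      = 4 * (coefc a j * Real.sin (2 * th a j * chi x) * (psi (rr a j) y / psi (rr a j) ((a:ℤ)+1))) := by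
  have hr0 : (0:ℝ) < rr a j := rr_pos a j
  have hP0 : (0:ℝ) < psi (rr a j) ((a:ℤ)+1) := psi_pos hr0 _
  have hPne : psi (rr a j) ((a:ℤ)+1) ≠ 0 := ne_of_gt hP0
  have hchi1 : chi (x+1) = chi x - 1 := by unfold chi; push_cast; ring
  have hchi2 : chi (x-1) = chi x + 1 := by unfold chi; push_cast; ring
  have hsin : Real.sin (2 * th a j * (chi x - 1)) + Real.sin (2 * th a j * (chi x + 1))
      = 2 * Real.cos (2 * th a j) * Real.sin (2 * th a j * chi x) := by
    have e1 : 2 * th a j * (chi x - 1) = 2 * th a j * chi x - 2 * th a j := by ring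
    have e2 : 2 * th a j * (chi x + 1) = 2 * th a j * chi x + 2 * th a j := by ring
    rw [e1, e2, Real.sin_sub, Real.sin_add]
    ring
  have hpsi : psi (rr a j) (y+1) + psi (rr a j) (y-1) = 2 * cc a j * psi (rr a j) y := by
    rw [psi_rec _ (ne_of_gt hr0), rr_add_inv]
  have hcc : Real.cos (2 * th a j) = 2 - cc a j := by unfold cc; ring
  rw [hchi1, hchi2]
  field_simp
  linear_combination (coefc a j * psi (rr a j) y) * hsin
    + (coefc a j * Real.sin (2 * th a j * chi x)) * hpsi
    + (2 * coefc a j * Real.sin (2 * th a j * chi x) * psi (rr a j) y) * hcc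

lemma W_harm (a : ℕ) (x y : ℤ) :
    Wf a (x+1, y) + Wf a (x-1, y) + Wf a (x, y+1) + Wf a (x, y-1)
      = 4 * Wf a (x, y) := by
  unfold Wf
  simp only
  have hS : ∑ j ∈ range (a+1), coefc a j * Real.sin (2 * th a j * chi (x+1)) * (psi (rr a j) y / psi (rr a j) ((a:ℤ)+1))
      + ∑ j ∈ range (a+1), coefc a j * Real.sin (2 * th a j * chi (x-1)) * (psi (rr a j) y / psi (rr a j) ((a:ℤ)+1))
      + ∑ j ∈ range (a+1), coefc a j * Real.sin (2 * th a j * chi x) * (psi (rr a j) (y+1) / psi (rr a j) ((a:ℤ)+1))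
      + ∑ j ∈ range (a+1), coefc a j * Real.sin (2 * th a j * chi x) * (psi (rr a j) (y-1) / psi (rr a j) ((a:ℤ)+1))
      = 4 * ∑ j ∈ range (a+1), coefc a j * Real.sin (2 * th a j * chi x) * (psi (rr a j) y / psi (rr a j) ((a:ℤ)+1)) := by
    rw [← Finset.sum_add_distrib, ← Finset.sum_add_distrib, ← Finset.sum_add_distrib, Finset.mul_sum]
    exact Finset.sum_congr rfl (fun j _ => mode_harm a j x y)
  have hchi1 : chi (x+1) = chi x - 1 := by unfold chi; push_cast; ring
  have hchi2 : chi (x-1) = chi x + 1 := by unfold chi; push_cast; ring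
  have hL : 2 * chi (x+1) / (2*(a:ℝ)+3) + 2 * chi (x-1) / (2*(a:ℝ)+3)
      + 2 * chi x / (2*(a:ℝ)+3) + 2 * chi x / (2*(a:ℝ)+3) = 4 * (2 * chi x / (2*(a:ℝ)+3)) := by
    rw [hchi1, hchi2]
    ring
  linarith


lemma W_odd (a : ℕ) (x y : ℤ) : Wf a (1-x, y) = - Wf a (x, y) := by
  unfold Wf
  simp only
  have hchi : chi (1-x) = - chi x := by unfold chi; push_cast; ring
  rw [hchi]
  rw [neg_add, ← Finset.sum_neg_distrib]
  congr 1
  · ring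
  · apply Finset.sum_congr rfl
    intro j _
    rw [mul_neg, Real.sin_neg]
    ring

lemma W_left (a : ℕ) (y : ℤ) : Wf a (-(a:ℤ)-1, y) = 1 := by
  unfold Wf
  simp only
  have hN : (0:ℝ) < 2*(a:ℝ)+3 := by positivity
  have hchi : chi (-(a:ℤ)-1) = (2*(a:ℝ)+3)/2 := by unfold chi; push_cast; ring
  rw [hchi]
  have hz : ∀ j ∈ range (a+1), coefc a j * Real.sin (2 * th a j * ((2*(a:ℝ)+3)/2))
      * (psi (rr a j) y / psi (rr a j) ((a:ℤ)+1)) = 0 := by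
    intro j _
    have harg : 2 * th a j * ((2*(a:ℝ)+3)/2) = ((j+1:ℕ):ℝ) * π := by
      unfold th; push_cast; field_simp
    rw [harg, sin_nat_pi]
    ring
  rw [Finset.sum_congr rfl hz, Finset.sum_const_zero]
  field_simp
  simp

lemma W_top (a : ℕ) {x : ℤ} (hx1 : -(a:ℤ) ≤ x) (hx2 : x ≤ 0) {y : ℤ}
    (hy : y = (a:ℤ)+1 ∨ y = -((a:ℤ)+1)) :
    Wf a (x, y) = 1 + 2 * chi x / (2*(a:ℝ)+3) := by
  unfold Wf
  simp only
  have hpsi1 : ∀ j, psi (rr a j) y / psi (rr a j) ((a:ℤ)+1) = 1 := by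
    intro j
    have hP0 : (0:ℝ) < psi (rr a j) ((a:ℤ)+1) := psi_pos (rr_pos a j) _
    rcases hy with h | h
    · rw [h]; field_simp
    · rw [h, psi_even]; field_simp
  set k : ℕ := (-x).toNat with hk
  have hxk : (x:ℝ) = -(k:ℝ) := by
    have h1 : ((-x).toNat : ℤ) = -x := Int.toNat_of_nonneg (by omega)
    have h2 : ((k:ℤ):ℝ) = ((-x:ℤ):ℝ) := by rw [hk, h1]
    push_cast at h2
    linarith
  have hka : k < a+1 := by
    have : (-x).toNat ≤ a := by omega
    omega
  have hsin : ∀ j, Real.sin (2 * th a j * chi x) = SV a j k := by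
    intro j
    unfold SV
    congr 1
    unfold chi
    rw [hxk]
    ring
  calc 2 * chi x / (2*(a:ℝ)+3) + ∑ j ∈ range (a+1), coefc a j * Real.sin (2 * th a j * chi x)
        * (psi (rr a j) y / psi (rr a j) ((a:ℤ)+1))
      = 2 * chi x / (2*(a:ℝ)+3) + ∑ j ∈ range (a+1), coefc a j * SV a j k := by
        congr 1
        apply Finset.sum_congr rfl
        intro j _
        rw [hpsi1 j, hsin j]
        ring
    _ = 2 * chi x / (2*(a:ℝ)+3) + 1 := by rw [coefc_inv a hka]
    _ = 1 + 2 * chi x / (2*(a:ℝ)+3) := by ring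

lemma six_choose (a : ℕ) (ha : 2 ≤ a) : 6 * ((a+1).choose 3) = (a+1)*a*(a-1) := by
  have h3 : 3 ≤ a+1 := by omega
  have h := Nat.choose_mul_factorial_mul_factorial h3
  have e1 : a+1-3 = a-2 := by omega
  rw [e1] at h
  have e2 : (a+1).factorial = (a+1)*a*(a-1)*(a-2).factorial := by
    have ha1 : a = (a-1)+1 := by omega
    have ha2 : a-1 = (a-2)+1 := by omega
    calc (a+1).factorial = (a+1) * a.factorial := Nat.factorial_succ a
      _ = (a+1) * (a * (a-1).factorial) := by rw [ha1, Nat.factorial_succ, ← ha1]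
      _ = (a+1) * (a * ((a-1) * (a-2).factorial)) := by rw [ha2, Nat.factorial_succ, ← ha2]
      _ = (a+1)*a*(a-1)*(a-2).factorial := by ring
  rw [e2] at h
  have h6 : (3).factorial = 6 := by decide
  rw [h6] at h
  have := Nat.eq_of_mul_eq_mul_right (Nat.factorial_pos (a-2))
    (show (6 * ((a+1).choose 3)) * (a-2).factorial = ((a+1)*a*(a-1)) * (a-2).factorial by
      calc (6 * ((a+1).choose 3)) * (a-2).factorial = (a+1).choose 3 * 6 * (a-2).factorial := by ring
        _ = (a+1)*a*(a-1)*(a-2).factorial := h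
        _ = ((a+1)*a*(a-1)) * (a-2).factorial := by ring)
  exact this

lemma binom_cube {u : ℝ} (hu : 0 ≤ u) (n : ℕ) (hn : 3 ≤ n) :
    (n.choose 3 : ℝ) * u^3 ≤ (1+u)^n := by
  have h := add_pow u 1 n
  simp only [one_pow, mul_one] at h
  have : (1+u)^n = ∑ k ∈ range (n+1), u ^ k * (n.choose k : ℝ) := by
    rw [add_comm 1 u, h]
  rw [this]
  have hmem : 3 ∈ range (n+1) := mem_range.mpr (by omega)
  have := Finset.single_le_sum (f := fun k => u ^ k * (n.choose k : ℝ))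
    (fun k _ => by positivity) hmem
  calc (n.choose 3 : ℝ) * u^3 = u^3 * (n.choose 3 : ℝ) := by ring
    _ ≤ _ := this

lemma psi_big (a : ℕ) (ha : 50 ≤ a) {j : ℕ} (hj : j < a+1) :
    ((j:ℝ)+1)^3 ≤ psi (rr a j) ((a:ℤ)+1) := by
  have hN : (0:ℝ) < 2*(a:ℝ)+3 := by positivity
  set u : ℝ := 4*((j:ℝ)+1)/(2*(a:ℝ)+3) with hu
  have hu0 : 0 ≤ u := by positivity
  have hru : 1 + u ≤ rr a j := by
    have h1 := rr_ge a hj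
    have h2 := sin_th_ge a hj
    have : u ≤ 2 * Real.sin (th a j) := by
      rw [hu]
      have := mul_le_mul_of_nonneg_left h2 (by norm_num : (0:ℝ) ≤ 2)
      calc 4*((j:ℝ)+1)/(2*(a:ℝ)+3) = 2 * (2*((j:ℝ)+1)/(2*a+3)) := by ring
        _ ≤ 2 * Real.sin (th a j) := this
    linarith
  have hpow : (1+u)^(a+1) ≤ (rr a j)^(a+1) :=
    pow_le_pow_left₀ (by positivity) hru (a+1)
  have hbin := binom_cube hu0 (a+1) (by omega)
  have hchoose : ((2*(a:ℝ)+3))^3 ≤ 64 * ((a+1).choose 3 : ℝ) := by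
    have h6 := six_choose a (by omega)
    have hc : ((a+1).choose 3 : ℝ) = ((a+1)*a*(a-1) : ℕ) / 6 := by
      rw [← h6]; push_cast; ring
    rw [hc]
    have hcast : (((a+1)*a*(a-1) : ℕ) : ℝ) = ((a:ℝ)+1)*(a:ℝ)*((a:ℝ)-1) := by
      push_cast [Nat.cast_sub (by omega : 1 ≤ a)]
      ring
    rw [hcast]
    have haR : (50:ℝ) ≤ (a:ℝ) := by exact_mod_cast ha
    nlinarith [haR]
  have hkey : ((j:ℝ)+1)^3 ≤ ((a+1).choose 3 : ℝ) * u^3 := by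
    rw [hu, div_pow, ← mul_div_assoc, le_div_iff₀ (by positivity)]
    calc ((j:ℝ)+1)^3 * (2*(a:ℝ)+3)^3 ≤ ((j:ℝ)+1)^3 * (64 * ((a+1).choose 3 : ℝ)) := by
          apply mul_le_mul_of_nonneg_left hchoose (by positivity)
      _ = ((a+1).choose 3 : ℝ) * (4*((j:ℝ)+1))^3 := by ring
  have hfin : (rr a j)^(a+1) ≤ psi (rr a j) ((a:ℤ)+1) := by
    have := psi_ge (one_le_rr a j) (a+1)
    have e : ((a+1 : ℕ) : ℤ) = (a:ℤ)+1 := by push_cast; ring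
    rw [← e]
    exact this
  calc ((j:ℝ)+1)^3 ≤ ((a+1).choose 3 : ℝ) * u^3 := hkey
    _ ≤ (1+u)^(a+1) := hbin
    _ ≤ (rr a j)^(a+1) := hpow
    _ ≤ psi (rr a j) ((a:ℤ)+1) := hfin

lemma sum_cube (m : ℕ) : ∑ j ∈ range m, (1:ℝ)/((j:ℝ)+1)^3 ≤ 2 := by
  have key : ∀ m : ℕ, ∑ j ∈ range m, (1:ℝ)/((j:ℝ)+1)^3 ≤ 2 - 1/((m:ℝ)+1) := by
    intro m
    induction m with
    | zero => norm_num
    | succ n ih =>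
      rw [Finset.sum_range_succ]
      have hn0 : (0:ℝ) < (n:ℝ)+1 := by positivity
      have hn1 : (0:ℝ) < (n:ℝ)+2 := by positivity
      rcases Nat.eq_zero_or_pos n with h0 | hpos
      · subst h0; simp; norm_num
      · have hnR : (1:ℝ) ≤ (n:ℝ) := by exact_mod_cast hpos
        have step : (1:ℝ)/((n:ℝ)+1)^3 ≤ 1/((n:ℝ)+1) - 1/((n:ℝ)+2) := by
          rw [div_sub_div _ _ (ne_of_gt hn0) (ne_of_gt hn1)]
          rw [div_le_div_iff₀ (by positivity) (by positivity)]
          ring_nf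
          nlinarith [hnR]
        have : ((n+1:ℕ):ℝ) = (n:ℝ)+1 := by push_cast; ring
        rw [this]
        have e2 : ((n:ℝ)+1+1) = (n:ℝ)+2 := by ring
        rw [e2]
        linarith
  calc ∑ j ∈ range m, (1:ℝ)/((j:ℝ)+1)^3 ≤ 2 - 1/((m:ℝ)+1) := key m
    _ ≤ 2 := by
        have : (0:ℝ) < (m:ℝ)+1 := by positivity
        have : (0:ℝ) ≤ 1/((m:ℝ)+1) := by positivity
        linarith

lemma W_center (a : ℕ) (ha : 50 ≤ a) : Wf a (0, 0) ≤ 17/(2*(a:ℝ)+3) := by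
  have hN : (0:ℝ) < 2*(a:ℝ)+3 := by positivity
  unfold Wf
  simp only
  have hchi : chi 0 = 1/2 := by unfold chi; norm_num
  rw [hchi]
  have hterm : ∀ j ∈ range (a+1), coefc a j * Real.sin (2 * th a j * (1/2))
      * (psi (rr a j) 0 / psi (rr a j) ((a:ℤ)+1)) ≤ 8/(2*(a:ℝ)+3) * (1/((j:ℝ)+1)^3) := by
    intro j hj
    have hj' : j < a+1 := mem_range.mp hj
    have hP0 : (0:ℝ) < psi (rr a j) ((a:ℤ)+1) := psi_pos (rr_pos a j) _
    have hpsi0 : psi (rr a j) 0 = 2 := by unfold psi; norm_num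
    have harg : 2 * th a j * (1/2) = th a j := by ring
    rw [hpsi0, harg]
    have h1 : 0 ≤ coefc a j * Real.sin (th a j) :=
      mul_nonneg (coefc_nonneg a hj') (le_of_lt (sin_th_pos a hj'))
    have h2 : coefc a j * Real.sin (th a j) ≤ 4/(2*(a:ℝ)+3) := coefc_sin_le a hj'
    have hbig := psi_big a ha hj'
    have hjp : (0:ℝ) < ((j:ℝ)+1)^3 := by positivity
    have h3 : 2 / psi (rr a j) ((a:ℤ)+1) ≤ 2/((j:ℝ)+1)^3 := by
      apply div_le_div_of_nonneg_left (by norm_num) hjp hbig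
    have h4 : (0:ℝ) ≤ 2 / psi (rr a j) ((a:ℤ)+1) := by positivity
    calc coefc a j * Real.sin (th a j) * (2 / psi (rr a j) ((a:ℤ)+1))
        ≤ (4/(2*(a:ℝ)+3)) * (2/((j:ℝ)+1)^3) := mul_le_mul h2 h3 h4 (by positivity)
      _ = 8/(2*(a:ℝ)+3) * (1/((j:ℝ)+1)^3) := by ring
  have hsum : ∑ j ∈ range (a+1), coefc a j * Real.sin (2 * th a j * (1/2))
      * (psi (rr a j) 0 / psi (rr a j) ((a:ℤ)+1))
      ≤ 8/(2*(a:ℝ)+3) * ∑ j ∈ range (a+1), (1:ℝ)/((j:ℝ)+1)^3 := by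
    rw [Finset.mul_sum]
    exact Finset.sum_le_sum hterm
  have hsc := sum_cube (a+1)
  have h8 : (0:ℝ) ≤ 8/(2*(a:ℝ)+3) := by positivity
  have : 8/(2*(a:ℝ)+3) * ∑ j ∈ range (a+1), (1:ℝ)/((j:ℝ)+1)^3 ≤ 8/(2*(a:ℝ)+3) * 2 :=
    mul_le_mul_of_nonneg_left hsc h8
  have hlin : 2 * (1/2) / (2*(a:ℝ)+3) = 1/(2*(a:ℝ)+3) := by ring
  rw [hlin]
  calc 1/(2*(a:ℝ)+3) + ∑ j ∈ range (a+1), coefc a j * Real.sin (2 * th a j * (1/2))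
        * (psi (rr a j) 0 / psi (rr a j) ((a:ℤ)+1))
      ≤ 1/(2*(a:ℝ)+3) + 8/(2*(a:ℝ)+3) * 2 := by linarith
    _ = 17/(2*(a:ℝ)+3) := by field_simp; ring


lemma maxprin (a : ℕ) (ha : 1 ≤ a) (u : ℤ × ℤ → ℝ)
    (hharm : ∀ x y : ℤ, -(a:ℤ) ≤ x → x ≤ 0 → -(a:ℤ) ≤ y → y ≤ a →
      u (x+1, y) + u (x-1, y) + u (x, y+1) + u (x, y-1) = 4 * u (x, y))
    (hodd : ∀ y : ℤ, -(a:ℤ) ≤ y → y ≤ a → u (1, y) = - u (0, y))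
    (hleft : ∀ y : ℤ, -(a:ℤ) ≤ y → y ≤ a → 0 ≤ u (-(a:ℤ)-1, y))
    (htop : ∀ x : ℤ, -(a:ℤ) ≤ x → x ≤ 0 → 0 ≤ u (x, (a:ℤ)+1) ∧ 0 ≤ u (x, -(a:ℤ)-1)) :
    ∀ x y : ℤ, -(a:ℤ) ≤ x → x ≤ 0 → -(a:ℤ) ≤ y → y ≤ a → 0 ≤ u (x, y) := by
  classical
  set inF : ℤ × ℤ → Prop := fun v => -(a:ℤ) ≤ v.1 ∧ v.1 ≤ 0 ∧ -(a:ℤ) ≤ v.2 ∧ v.2 ≤ a with hinF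
  set inLC : ℤ × ℤ → Prop := fun v => v.1 = -(a:ℤ)-1 ∧ -(a:ℤ) ≤ v.2 ∧ v.2 ≤ a with hinLC
  set inTB : ℤ × ℤ → Prop := fun v => -(a:ℤ) ≤ v.1 ∧ v.1 ≤ 0 ∧ (v.2 = (a:ℤ)+1 ∨ v.2 = -(a:ℤ)-1)
    with hinTB
  set E : Finset (ℤ × ℤ) :=
    ((Finset.Icc (-(a:ℤ)-1) 1) ×ˢ (Finset.Icc (-(a:ℤ)-1) ((a:ℤ)+1))).filter
      (fun v => inF v ∨ inLC v ∨ inTB v) with hE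
  have memE : ∀ v : ℤ × ℤ, (inF v ∨ inLC v ∨ inTB v) → v ∈ E := by
    intro v hv
    rw [hE, Finset.mem_filter, Finset.mem_product, Finset.mem_Icc, Finset.mem_Icc]
    refine ⟨⟨?_, ?_⟩, hv⟩ <;>
      rcases hv with h | h | h <;>
      simp only [hinF, hinLC, hinTB] at h <;>
      constructor <;> omega
  have hne : E.Nonempty := ⟨(0,0), memE (0,0) (Or.inl (by simp only [hinF]; constructor <;> omega))⟩
  obtain ⟨v₀, hv₀E, hv₀min⟩ := Finset.exists_min_image E u hne
  -- propagation claim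
  have key : ∀ k : ℕ, ∀ v : ℤ × ℤ, inF v → u v = u v₀ → (v.1 + a).toNat ≤ k → 0 ≤ u v₀ := by
    intro k
    induction k with
    | zero =>
      intro v hvF hvm hk
      -- v.1 = -a
      obtain ⟨x, y⟩ := v
      simp only [hinF] at hvF
      have hx : x = -(a:ℤ) := by omega
      -- x < 0 since a ≥ 1
      have hh := hharm x y (by omega) (by omega) (by omega) (by omega)
      have h1 : u (x+1, y) ≥ u v₀ := hv₀min _ (memE _ (Or.inl (by simp only [hinF]; constructor <;> [omega; constructor <;> [omega; constructor <;> omega]])))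
      have h3 : u (x, y+1) ≥ u v₀ := by
        rcases (by omega : y + 1 ≤ (a:ℤ) ∨ y + 1 = (a:ℤ)+1) with h | h
        · exact hv₀min _ (memE _ (Or.inl (by simp only [hinF]; refine ⟨by omega, by omega, by omega, by omega⟩)))
        · exact hv₀min _ (memE _ (Or.inr (Or.inr (by simp only [hinTB]; exact ⟨by omega, by omega, Or.inl h⟩))))
      have h4 : u (x, y-1) ≥ u v₀ := by
        rcases (by omega : -(a:ℤ) ≤ y - 1 ∨ y - 1 = -(a:ℤ)-1) with h | h
        · exact hv₀min _ (memE _ (Or.inl (by simp only [hinF]; refine ⟨by omega, by omega, by omega, by omega⟩)))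
        · exact hv₀min _ (memE _ (Or.inr (Or.inr (by simp only [hinTB]; exact ⟨by omega, by omega, Or.inr h⟩))))
      -- left neighbor is LC
      have h2 : 0 ≤ u (x-1, y) := by
        have : x - 1 = -(a:ℤ)-1 := by omega
        rw [this]
        exact hleft y (by omega) (by omega)
      -- u(x-1,y) = u v₀ forced
      have h2' : u (x-1, y) ≤ u v₀ := by
        linarith [hh, h1, h3, h4, hvm]
      linarith
    | succ n ih =>
      intro v hvF hvm hk
      obtain ⟨x, y⟩ := v
      simp only [hinF] at hvF
      rcases eq_or_lt_of_le hvF.2.1 with hx0 | hxneg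
      · -- x = 0 : reflection case
        have hx : x = 0 := hx0
        subst hx
        have hh := hharm 0 y (by omega) (by omega) (by omega) (by omega)
        have ho := hodd y (by omega) (by omega)
        have h2 : u (0-1, y) ≥ u v₀ := hv₀min _ (memE _ (Or.inl (by simp only [hinF]; refine ⟨by omega, by omega, by omega, by omega⟩)))
        have h3 : u (0, y+1) ≥ u v₀ := by
          rcases (by omega : y + 1 ≤ (a:ℤ) ∨ y + 1 = (a:ℤ)+1) with h | h
          · exact hv₀min _ (memE _ (Or.inl (by simp only [hinF]; refine ⟨by omega, by omega, by omega, by omega⟩)))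
          · exact hv₀min _ (memE _ (Or.inr (Or.inr (by simp only [hinTB]; exact ⟨by omega, by omega, Or.inl h⟩))))
        have h4 : u (0, y-1) ≥ u v₀ := by
          rcases (by omega : -(a:ℤ) ≤ y - 1 ∨ y - 1 = -(a:ℤ)-1) with h | h
          · exact hv₀min _ (memE _ (Or.inl (by simp only [hinF]; refine ⟨by omega, by omega, by omega, by omega⟩)))
          · exact hv₀min _ (memE _ (Or.inr (Or.inr (by simp only [hinTB]; exact ⟨by omega, by omega, Or.inr h⟩))))
        have e1 : ((0:ℤ)+1, y) = ((1:ℤ), y) := by norm_num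
        rw [e1, ho] at hh
        -- 4 u(0,y) = -u(0,y) + rest, rest ≥ 3 u v₀, u(0,y) = u v₀
        linarith [hh, h2, h3, h4, hvm]
      · -- x < 0
        have hh := hharm x y (by omega) (by omega) (by omega) (by omega)
        have h1 : u (x+1, y) ≥ u v₀ := hv₀min _ (memE _ (Or.inl (by simp only [hinF]; refine ⟨by omega, by omega, by omega, by omega⟩)))
        have h3 : u (x, y+1) ≥ u v₀ := by
          rcases (by omega : y + 1 ≤ (a:ℤ) ∨ y + 1 = (a:ℤ)+1) with h | h
          · exact hv₀min _ (memE _ (Or.inl (by simp only [hinF]; refine ⟨by omega, by omega, by omega, by omega⟩)))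
          · exact hv₀min _ (memE _ (Or.inr (Or.inr (by simp only [hinTB]; exact ⟨by omega, by omega, Or.inl h⟩))))
        have h4 : u (x, y-1) ≥ u v₀ := by
          rcases (by omega : -(a:ℤ) ≤ y - 1 ∨ y - 1 = -(a:ℤ)-1) with h | h
          · exact hv₀min _ (memE _ (Or.inl (by simp only [hinF]; refine ⟨by omega, by omega, by omega, by omega⟩)))
          · exact hv₀min _ (memE _ (Or.inr (Or.inr (by simp only [hinTB]; exact ⟨by omega, by omega, Or.inr h⟩))))
        rcases (by omega : x - 1 = -(a:ℤ)-1 ∨ -(a:ℤ) ≤ x - 1) with hL | hL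
        · have h2 : 0 ≤ u (x-1, y) := by rw [hL]; exact hleft y (by omega) (by omega)
          linarith [hh, h1, h3, h4, hvm]
        · -- interior: u(x-1,y) = u v₀, recurse
          have h2 : u (x-1, y) ≥ u v₀ := hv₀min _ (memE _ (Or.inl (by simp only [hinF]; refine ⟨by omega, by omega, by omega, by omega⟩)))
          have h2' : u (x-1, y) = u v₀ := by
            have : u (x-1,y) ≤ u v₀ := by linarith [hh, h1, h3, h4, hvm]
            linarith
          exact ih (x-1, y) (by simp only [hinF]; refine ⟨by omega, by omega, by omega, by omega⟩) h2' (by simp only; omega)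
  -- v₀ nonneg
  have hv₀ : 0 ≤ u v₀ := by
    have hP := (Finset.mem_filter.mp (hE ▸ hv₀E)).2
    rcases hP with h | h | h
    · exact key (v₀.1 + a).toNat v₀ h rfl le_rfl
    · simp only [hinLC] at h
      have : v₀ = (-(a:ℤ)-1, v₀.2) := by
        cases v₀; simp only at h ⊢; exact Prod.ext h.1 rfl
      rw [this]
      exact hleft v₀.2 h.2.1 h.2.2
    · simp only [hinTB] at h
      rcases h.2.2 with h2 | h2
      · have : v₀ = (v₀.1, (a:ℤ)+1) := by cases v₀; simp only at h2 ⊢; exact Prod.ext rfl h2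
        rw [this]
        exact (htop v₀.1 h.1 h.2.1).1
      · have : v₀ = (v₀.1, -(a:ℤ)-1) := by cases v₀; simp only at h2 ⊢; exact Prod.ext rfl h2
        rw [this]
        exact (htop v₀.1 h.1 h.2.1).2
  intro x y h1 h2 h3 h4
  calc (0:ℝ) ≤ u v₀ := hv₀
    _ ≤ u (x, y) := hv₀min _ (memE _ (Or.inl (by simp only [hinF]; exact ⟨h1, h2, h3, h4⟩)))


lemma znorm_nonneg (v : ℤ × ℤ) : 0 ≤ znorm v := Real.sqrt_nonneg _

lemma znorm_ge_one {v : ℤ × ℤ} (hv : v ≠ ((0:ℤ),(0:ℤ))) : 1 ≤ znorm v := by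
  have hz : (1:ℤ) ≤ v.1^2 + v.2^2 := by
    have : v.1 ≠ 0 ∨ v.2 ≠ 0 := by
      by_contra hc
      push_neg at hc
      exact hv (Prod.ext hc.1 hc.2)
    rcases this with h | h
    · have h1 : 1 ≤ |v.1| := Int.one_le_abs (by omega)
      nlinarith [sq_nonneg v.2, sq_abs v.1]
    · have h1 : 1 ≤ |v.2| := Int.one_le_abs (by omega)
      nlinarith [sq_nonneg v.1, sq_abs v.2]
  have hzR : (1:ℝ) ≤ (v.1:ℝ)^2 + (v.2:ℝ)^2 := by exact_mod_cast hz
  calc (1:ℝ) = Real.sqrt 1 := by simp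
    _ ≤ znorm v := Real.sqrt_le_sqrt hzR

lemma inrad_lb (D : Finset (ℤ × ℤ)) (h0 : ((0:ℤ),(0:ℤ)) ∈ D) : 1 ≤ inrad D := by
  unfold inrad
  apply le_csInf
  · obtain ⟨v, hv⟩ := Infinite.exists_notMem_finset D
    exact ⟨znorm v, v, hv, rfl⟩
  · rintro r ⟨v, hv, rfl⟩
    exact znorm_ge_one (fun he => hv (he ▸ h0))

lemma mem_of_znorm_lt {D : Finset (ℤ × ℤ)} {v : ℤ × ℤ} (hv : znorm v < inrad D) : v ∈ D := by
  by_contra hne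
  have hbdd : BddBelow {r : ℝ | ∃ v : ℤ × ℤ, v ∉ D ∧ r = znorm v} := by
    refine ⟨0, ?_⟩
    rintro r ⟨w, hw, rfl⟩
    exact znorm_nonneg w
  have : inrad D ≤ znorm v := csInf_le hbdd ⟨v, hne, rfl⟩
  linarith

lemma box_mem {D : Finset (ℤ × ℤ)} (h0 : ((0:ℤ),(0:ℤ)) ∈ D) (a : ℕ)
    (hbox : ((a:ℝ)+2) ≤ inrad D / 2)
    {v : ℤ × ℤ} (h1 : -(a:ℤ)-1 ≤ v.1) (h2 : v.1 ≤ (a:ℤ)+2)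
    (h3 : -(a:ℤ)-1 ≤ v.2) (h4 : v.2 ≤ (a:ℤ)+1) : v ∈ D := by
  have hn1 : 1 ≤ inrad D := inrad_lb D h0
  apply mem_of_znorm_lt
  unfold znorm
  have e1 : (v.1:ℝ)^2 ≤ ((a:ℝ)+2)^2 := by
    have l1 : -((a:ℝ)+2) ≤ (v.1:ℝ) := by
      have : ((-(a:ℤ)-1 : ℤ):ℝ) ≤ (v.1:ℝ) := by exact_mod_cast h1
      push_cast at this; linarith
    have l2 : (v.1:ℝ) ≤ (a:ℝ)+2 := by
      have : ((v.1:ℤ):ℝ) ≤ (((a:ℤ)+2 : ℤ):ℝ) := by exact_mod_cast h2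
      push_cast at this; linarith
    nlinarith
  have e2 : (v.2:ℝ)^2 ≤ ((a:ℝ)+2)^2 := by
    have l1 : -((a:ℝ)+2) ≤ (v.2:ℝ) := by
      have : ((-(a:ℤ)-1 : ℤ):ℝ) ≤ (v.2:ℝ) := by exact_mod_cast h3
      push_cast at this; linarith
    have l2 : (v.2:ℝ) ≤ (a:ℝ)+2 := by
      have : ((v.2:ℤ):ℝ) ≤ (((a:ℤ)+1 : ℤ):ℝ) := by exact_mod_cast h4
      push_cast at this; linarith
    nlinarith
  have key : (v.1:ℝ)^2 + (v.2:ℝ)^2 < (inrad D)^2 := by nlinarith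
  calc Real.sqrt ((v.1:ℝ)^2 + (v.2:ℝ)^2) < Real.sqrt ((inrad D)^2) := by
        apply Real.sqrt_lt_sqrt (by positivity) key
    _ = inrad D := Real.sqrt_sq (by linarith)

lemma core (D : Finset (ℤ × ℤ)) (h0 : ((0:ℤ),(0:ℤ)) ∈ D) (h : ℤ × ℤ → ℝ) (M : ℝ)
    (hharm : DiscreteHarmonicOn D h)
    (hbd : ∀ v : ℤ × ℤ, (v ∈ D ∨ ∃ u ∈ D, v ∈ nbrs u) → |h v| ≤ M)
    (a : ℕ) (ha50 : 50 ≤ a) (hboxc : ((a:ℝ)+2) ≤ inrad D / 2) :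
    |h (1, 0) - h (0, 0)| ≤ 34*M/(2*(a:ℝ)+3) := by
  have hM : 0 ≤ M := le_trans (abs_nonneg _) (hbd (0,0) (Or.inl h0))
  have ha1 : 1 ≤ a := by omega
  have hbox : ∀ v : ℤ × ℤ, -(a:ℤ)-1 ≤ v.1 → v.1 ≤ (a:ℤ)+2 →
      -(a:ℤ)-1 ≤ v.2 → v.2 ≤ (a:ℤ)+1 → v ∈ D :=
    fun v p1 p2 p3 p4 => box_mem h0 a hboxc p1 p2 p3 p4
  -- the antisymmetrized function
  obtain ⟨G, hG⟩ : ∃ G : ℤ × ℤ → ℝ, G = fun v => h v - h (1 - v.1, v.2) := ⟨_, rfl⟩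
  have hGodd : ∀ x y : ℤ, G (1-x, y) = - G (x, y) := by
    intro x y
    simp only [hG]
    have e : (1:ℤ) - (1-x) = x := by ring
    rw [e]
    ring
  have hGharm : ∀ x y : ℤ, -(a:ℤ) ≤ x → x ≤ 0 → -(a:ℤ) ≤ y → y ≤ a →
      G (x+1, y) + G (x-1, y) + G (x, y+1) + G (x, y-1) = 4 * G (x, y) := by
    intro x y p1 p2 p3 p4
    have hv : ((x,y) : ℤ × ℤ) ∈ D := hbox _ (by simp; omega) (by simp; omega) (by simp; omega) (by simp; omega)
    have hs : ((1-x, y) : ℤ × ℤ) ∈ D := hbox _ (by simp; omega) (by simp; omega) (by simp; omega) (by simp; omega)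
    have e1 := hharm _ hv
    have e2 := hharm _ hs
    simp only at e1 e2
    simp only [hG]
    have c1 : (1:ℤ) - (x+1) = (1-x) - 1 := by ring
    have c2 : (1:ℤ) - (x-1) = (1-x) + 1 := by ring
    rw [c1, c2]
    linarith [e1, e2]
  have hGbd : ∀ v : ℤ × ℤ, -(a:ℤ)-1 ≤ v.1 → v.1 ≤ 1 → -(a:ℤ)-1 ≤ v.2 → v.2 ≤ (a:ℤ)+1 →
      |G v| ≤ 2*M := by
    intro v p1 p2 p3 p4
    have hv : v ∈ D := hbox _ p1 (by omega) p3 p4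
    have hs : ((1 - v.1, v.2) : ℤ × ℤ) ∈ D := hbox _ (by simp; omega) (by simp; omega) (by simp; omega) (by simp; omega)
    have b1 : |h v| ≤ M := hbd _ (Or.inl hv)
    have b2 : |h (1 - v.1, v.2)| ≤ M := hbd _ (Or.inl hs)
    calc |G v| = |h v - h (1 - v.1, v.2)| := by rw [hG]
      _ ≤ |h v| + |h (1 - v.1, v.2)| := abs_sub _ _
      _ ≤ 2*M := by linarith
  -- apply max principle to both signs
  have main : ∀ s : ℝ, s = 1 ∨ s = -1 → s * G (0,0) ≤ 2*M * Wf a (0,0) := by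
    intro s hs
    obtain ⟨u, hu⟩ : ∃ u : ℤ × ℤ → ℝ, u = fun v => 2*M * Wf a v - s * G v := ⟨_, rfl⟩
    have h1 : ∀ x y : ℤ, -(a:ℤ) ≤ x → x ≤ 0 → -(a:ℤ) ≤ y → y ≤ a →
        u (x+1, y) + u (x-1, y) + u (x, y+1) + u (x, y-1) = 4 * u (x, y) := by
      intro x y p1 p2 p3 p4
      have hW := W_harm a x y
      have hGh := hGharm x y p1 p2 p3 p4
      simp only [hu]
      linear_combination (2*M) * hW - s * hGh
    have h2 : ∀ y : ℤ, -(a:ℤ) ≤ y → y ≤ a → u (1, y) = - u (0, y) := by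
      intro y p1 p2
      have hW := W_odd a 0 y
      have hGo := hGodd 0 y
      simp only [hu]
      rw [show (1:ℤ) - 0 = 1 by ring] at hW hGo
      rw [hW, hGo]
      ring
    have h3 : ∀ y : ℤ, -(a:ℤ) ≤ y → y ≤ a → 0 ≤ u (-(a:ℤ)-1, y) := by
      intro y p1 p2
      have hW := W_left a y
      have hb := hGbd (-(a:ℤ)-1, y) (by simp) (by simp) (by simp; omega) (by simp; omega)
      have : s * G (-(a:ℤ)-1, y) ≤ 2*M := by
        rcases hs with h | h <;> rw [h] <;> cases abs_le.mp hb <;> linarith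
      simp only [hu]
      rw [hW]
      linarith
    have h4 : ∀ x : ℤ, -(a:ℤ) ≤ x → x ≤ 0 → 0 ≤ u (x, (a:ℤ)+1) ∧ 0 ≤ u (x, -(a:ℤ)-1) := by
      intro x p1 p2
      have hchi : (0:ℝ) ≤ 2 * chi x / (2*(a:ℝ)+3) := by
        have hx0 : (x:ℝ) ≤ 0 := by exact_mod_cast p2
        have : 0 ≤ chi x := by unfold chi; linarith
        apply div_nonneg (by linarith) (by positivity)
      have hMt : 0 ≤ 2*M*(2 * chi x / (2*(a:ℝ)+3)) := mul_nonneg (by linarith) hchi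
      constructor
      · have hW := W_top a p1 p2 (y := (a:ℤ)+1) (Or.inl rfl)
        have hb := hGbd (x, (a:ℤ)+1) (by simp; omega) (by simp; omega) (by simp; omega) (by simp)
        have hsb : s * G (x, (a:ℤ)+1) ≤ 2*M := by
          rcases hs with h | h <;> rw [h] <;> cases abs_le.mp hb <;> linarith
        simp only [hu]
        rw [hW]
        have expand : 2*M*(1 + 2 * chi x / (2*(a:ℝ)+3)) - s * G (x, (a:ℤ)+1)
            = (2*M - s * G (x, (a:ℤ)+1)) + 2*M*(2 * chi x / (2*(a:ℝ)+3)) := by ring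
        rw [expand]
        have : 0 ≤ 2*M - s * G (x, (a:ℤ)+1) := by linarith
        linarith
      · have hW := W_top a p1 p2 (y := -((a:ℤ)+1)) (Or.inr rfl)
        have hb := hGbd (x, -(a:ℤ)-1) (by simp; omega) (by simp; omega) (by simp) (by simp; omega)
        have hsb : s * G (x, -(a:ℤ)-1) ≤ 2*M := by
          rcases hs with h | h <;> rw [h] <;> cases abs_le.mp hb <;> linarith
        simp only [hu]
        have e : (-((a:ℤ)+1)) = -(a:ℤ)-1 := by ring
        rw [e] at hW
        rw [hW]
        have expand : 2*M*(1 + 2 * chi x / (2*(a:ℝ)+3)) - s * G (x, -(a:ℤ)-1)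
            = (2*M - s * G (x, -(a:ℤ)-1)) + 2*M*(2 * chi x / (2*(a:ℝ)+3)) := by ring
        rw [expand]
        have : 0 ≤ 2*M - s * G (x, -(a:ℤ)-1) := by linarith
        linarith
    have := maxprin a ha1 u h1 h2 h3 h4 0 0 (neg_nonpos.mpr (Int.natCast_nonneg a)) le_rfl
      (neg_nonpos.mpr (Int.natCast_nonneg a)) (Int.natCast_nonneg a)
    simp only [hu] at this
    linarith
  have hWc := W_center a ha50
  have hWnn : 2*M * Wf a (0,0) ≤ 2*M * (17/(2*(a:ℝ)+3)) := by
    apply mul_le_mul_of_nonneg_left hWc (by linarith)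
  have hg1 := main 1 (Or.inl rfl)
  have hg2 := main (-1) (Or.inr rfl)
  have hGabs : |G (0,0)| ≤ 2*M * (17/(2*(a:ℝ)+3)) := by
    rw [abs_le]
    constructor
    · linarith
    · linarith
  have hGe : G (0,0) = h (0,0) - h (1,0) := by
    simp only [hG]
    norm_num
  rw [abs_sub_comm, ← hGe]
  calc |G (0,0)| ≤ 2*M * (17/(2*(a:ℝ)+3)) := hGabs
    _ = 34*M/(2*(a:ℝ)+3) := by ring

lemma step_e1 (D : Finset (ℤ × ℤ)) (h0 : ((0:ℤ),(0:ℤ)) ∈ D) (h : ℤ × ℤ → ℝ) (M : ℝ)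
    (hharm : DiscreteHarmonicOn D h)
    (hbd : ∀ v : ℤ × ℤ, (v ∈ D ∨ ∃ u ∈ D, v ∈ nbrs u) → |h v| ≤ M) :
    |h (1, 0) - h (0, 0)| ≤ 1000 * M / inrad D := by
  have hM : 0 ≤ M := le_trans (abs_nonneg _) (hbd (0,0) (Or.inl h0))
  have hn1 : 1 ≤ inrad D := inrad_lb D h0
  have hn0 : 0 < inrad D := by linarith
  rcases le_or_gt (inrad D) 500 with hsmall | hbig
  · have h1 : |h (1,0)| ≤ M := hbd _ (Or.inr ⟨(0,0), h0, by simp [nbrs]⟩)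
    have h2 : |h (0,0)| ≤ M := hbd _ (Or.inl h0)
    have habs : |h (1,0) - h (0,0)| ≤ 2*M := by
      calc |h (1,0) - h (0,0)| ≤ |h (1,0)| + |h (0,0)| := abs_sub _ _
        _ ≤ 2*M := by linarith
    calc |h (1,0) - h (0,0)| ≤ 2*M := habs
      _ ≤ 1000 * M / inrad D := by
          rw [le_div_iff₀ hn0]
          nlinarith
  · obtain ⟨a, ha50, haR1, haR2⟩ : ∃ a : ℕ, 50 ≤ a ∧ (a:ℝ) ≤ inrad D/2 - 2 ∧ inrad D/2 - 3 ≤ (a:ℝ) := by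
      refine ⟨⌊inrad D/2⌋₊ - 2, ?_, ?_, ?_⟩
      · have hfl2 : inrad D/2 - 1 < (⌊inrad D/2⌋₊ : ℝ) := Nat.sub_one_lt_floor _
        have h249 : (249:ℝ) < (⌊inrad D/2⌋₊ : ℝ) := by linarith
        have h249' : (249:ℕ) < ⌊inrad D/2⌋₊ := by exact_mod_cast h249
        omega
      · have hfl : (⌊inrad D/2⌋₊ : ℝ) ≤ inrad D/2 := Nat.floor_le (by positivity)
        have hfl2 : inrad D/2 - 1 < (⌊inrad D/2⌋₊ : ℝ) := Nat.sub_one_lt_floor _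
        have h249 : (249:ℝ) < (⌊inrad D/2⌋₊ : ℝ) := by linarith
        have h249' : (249:ℕ) < ⌊inrad D/2⌋₊ := by exact_mod_cast h249
        have : ((⌊inrad D/2⌋₊ - 2 : ℕ) : ℝ) = (⌊inrad D/2⌋₊ : ℝ) - 2 := by
          push_cast [Nat.cast_sub (by omega : 2 ≤ ⌊inrad D/2⌋₊)]
          ring
        rw [this]
        linarith
      · have hfl2 : inrad D/2 - 1 < (⌊inrad D/2⌋₊ : ℝ) := Nat.sub_one_lt_floor _
        have h249 : (249:ℝ) < (⌊inrad D/2⌋₊ : ℝ) := by linarith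
        have h249' : (249:ℕ) < ⌊inrad D/2⌋₊ := by exact_mod_cast h249
        have : ((⌊inrad D/2⌋₊ - 2 : ℕ) : ℝ) = (⌊inrad D/2⌋₊ : ℝ) - 2 := by
          push_cast [Nat.cast_sub (by omega : 2 ≤ ⌊inrad D/2⌋₊)]
          ring
        rw [this]
        linarith
    have hboxc : ((a:ℝ)+2) ≤ inrad D / 2 := by linarith
    have hcore := core D h0 h M hharm hbd a ha50 hboxc
    have hNpos : (0:ℝ) < 2*(a:ℝ)+3 := by positivity
    calc |h (1,0) - h (0,0)| ≤ 34*M/(2*(a:ℝ)+3) := hcore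
      _ ≤ 1000 * M / inrad D := by
          rw [div_le_div_iff₀ hNpos hn0]
          nlinarith

end DDE

lemma DDE.znorm_swap (v : ℤ × ℤ) : znorm (v.2, v.1) = znorm v := by
  unfold znorm
  simp only
  congr 1
  ring

/-- **Discrete derivative estimate.**  There is a constant `C > 0` such that for every
finite grid domain `D ⊆ ℤ²` containing `0` and every function `h`, discrete harmonic on
`D` and bounded by `M` on `D` together with its boundary, the discrete derivatives of `h`
at `0` satisfy `|h(e₁) − h(0)| ≤ C M / inr₀(D)` and `|h(e₂) − h(0)| ≤ C M / inr₀(D)`. -/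
theorem discrete_derivative_estimate :
    ∃ C : ℝ, 0 < C ∧
      ∀ (D : Finset (ℤ × ℤ)), (0, 0) ∈ D →
        ∀ (h : ℤ × ℤ → ℝ) (M : ℝ),
          DiscreteHarmonicOn D h →
          (∀ v : ℤ × ℤ, (v ∈ D ∨ ∃ u ∈ D, v ∈ nbrs u) → |h v| ≤ M) →
          |h (1, 0) - h (0, 0)| ≤ C * M / inrad D ∧
            |h (0, 1) - h (0, 0)| ≤ C * M / inrad D := by
  refine ⟨1000, by norm_num, ?_⟩
  intro D h0 h M hharm hbd
  constructor
  · exact DDE.step_e1 D h0 h M hharm hbd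
  · -- transpose the domain and the function
    obtain ⟨D', hD'⟩ : ∃ D' : Finset (ℤ × ℤ), D' = D.image (fun v => (v.2, v.1)) := ⟨_, rfl⟩
    obtain ⟨h', hh'⟩ : ∃ h' : ℤ × ℤ → ℝ, h' = fun v : ℤ × ℤ => h (v.2, v.1) := ⟨_, rfl⟩
    have hmem : ∀ v : ℤ × ℤ, v ∈ D' ↔ ((v.2, v.1) ∈ D) := by
      intro v
      rw [hD', Finset.mem_image]
      constructor
      · rintro ⟨w, hw, rfl⟩
        exact hw
      · intro hv
        exact ⟨(v.2, v.1), hv, rfl⟩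
    have h0' : ((0:ℤ), (0:ℤ)) ∈ D' := (hmem (0,0)).mpr h0
    have hharm' : DiscreteHarmonicOn D' h' := by
      intro v hv
      have := hharm (v.2, v.1) ((hmem v).mp hv)
      simp only at this
      simp only [hh']
      linarith [this]
    have hbd' : ∀ v : ℤ × ℤ, (v ∈ D' ∨ ∃ u ∈ D', v ∈ nbrs u) → |h' v| ≤ M := by
      intro v hv
      rw [hh']
      rcases hv with hv | ⟨w, hw, hvn⟩
      · exact hbd (v.2, v.1) (Or.inl ((hmem v).mp hv))
      · have hwD : (w.2, w.1) ∈ D := (hmem w).mp hw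
        apply hbd (v.2, v.1)
        refine Or.inr ⟨(w.2, w.1), hwD, ?_⟩
        simp only [nbrs, List.mem_cons, List.not_mem_nil, or_false] at hvn
        rcases hvn with hc | hc | hc | hc <;> subst hc <;> simp [nbrs]
    have hinrad : inrad D' = inrad D := by
      unfold inrad
      congr 1
      ext r
      constructor
      · rintro ⟨v, hv, rfl⟩
        refine ⟨(v.2, v.1), ?_, (DDE.znorm_swap v).symm⟩
        intro hc
        exact hv ((hmem v).mpr hc)
      · rintro ⟨v, hv, rfl⟩
        refine ⟨(v.2, v.1), ?_, (DDE.znorm_swap v).symm⟩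
        intro hc
        have := (hmem (v.2, v.1)).mp hc
        simp only at this
        exact hv this
    have hstep := DDE.step_e1 D' h0' h' M hharm' hbd'
    rw [hinrad] at hstep
    have e1 : h' (1, 0) = h (0, 1) := by rw [hh']
    have e2 : h' (0, 0) = h (0, 0) := by rw [hh']
    rw [e1, e2] at hstep
    exact hstep
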